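/- arXiv:2512.14077 — 7 statements merged into one kernel-verified Lean document; each statement's English description precedes it below -/
import Mathlib

section
/- Let p be a prime and let x be a real number with 0 < x < 1. Then the infinite product \prod_{j\ge 1} (1 - x^{p^j})^{-1/p^j} (with real-number exponentiation rpow) converges (the family of factors is multipliable) and equals T_p(x) = exp(\sum_{n\ge 1} (\nu_p(n)/n) x^n). -/
open scoped BigOperators

/-- `T_p(x) = exp(∑_{n ≥ 1} (ν_p(n)/n) x^n)` for real `0 < x < 1` (the `n = 0` term vanishes). -/
noncomputable def TpR (p : ℕ) (x : ℝ) : ℝ :=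
  Real.exp (∑' n : ℕ, ((padicValNat p n : ℝ) / (n : ℝ)) * x ^ n)

theorem stmt_2 (p : ℕ) (hp : p.Prime) (x : ℝ) (hx0 : 0 < x) (hx1 : x < 1) :
    Multipliable (fun j : ℕ => (1 - x ^ p ^ (j + 1)) ^ (-(1 / (p : ℝ) ^ (j + 1)))) ∧
    (∏' j : ℕ, (1 - x ^ p ^ (j + 1)) ^ (-(1 / (p : ℝ) ^ (j + 1)))) = TpR p x := by
  haveI : Fact p.Prime := ⟨hp⟩
  set q : ℕ → ℕ := fun j => p ^ (j + 1) with hq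
  have hq0 : ∀ j, 0 < q j := fun j => pow_pos hp.pos _
  have hq1 : ∀ j, 1 ≤ q j := fun j => (hq0 j)
  have hy0 : ∀ j, 0 < x ^ q j := fun j => pow_pos hx0 _
  have hy1 : ∀ j, x ^ q j < 1 := fun j => pow_lt_one₀ hx0.le hx1 (hq0 j).ne'
  have h1y : ∀ j, 0 < 1 - x ^ q j := fun j => by linarith [hy1 j]
  set g : ℕ → ℝ := fun j => ((q j : ℝ))⁻¹ * (-Real.log (1 - x ^ q j)) with hgdef
  set F : ℕ → ℕ → ℝ := fun j n => if q j ∣ n ∧ n ≠ 0 then x ^ n / n else 0 with hF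
  have hFnn : ∀ j n, 0 ≤ F j n := by
    intro j n
    simp only [hF]
    split
    · positivity
    · exact le_rfl
  -- per-j sum
  have h1 : ∀ j, HasSum (F j) (g j) := by
    intro j
    have hlog : HasSum (fun m : ℕ => (x ^ q j) ^ (m + 1) / (m + 1))
        (-Real.log (1 - x ^ q j)) :=
      Real.hasSum_pow_div_log_of_abs_lt_one (by rw [abs_of_pos (hy0 j)]; exact hy1 j)
    have h2 := hlog.mul_left ((q j : ℝ))⁻¹
    have hinj : Function.Injective (fun m : ℕ => q j * (m + 1)) := by
      intro a b hab
      simpa using Nat.eq_of_mul_eq_mul_left (hq0 j) hab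
    have hzero : ∀ n ∉ Set.range (fun m : ℕ => q j * (m + 1)), F j n = 0 := by
      intro n hn
      simp only [hF, ite_eq_right_iff]
      rintro ⟨⟨m, rfl⟩, hne⟩
      exfalso
      apply hn
      have hm : m ≠ 0 := by rintro rfl; simp at hne
      refine ⟨m - 1, ?_⟩
      show q j * (m - 1 + 1) = q j * m
      congr 1
      omega
    refine (hinj.hasSum_iff hzero).mp (h2.congr_fun fun m => ?_)
    have hd : q j ∣ q j * (m + 1) := dvd_mul_right _ _
    have hne : q j * (m + 1) ≠ 0 := Nat.mul_ne_zero (hq0 j).ne' (Nat.succ_ne_zero m)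
    have hm1 : ((m : ℝ) + 1) ≠ 0 := by positivity
    have hqj : ((q j : ℝ)) ≠ 0 := by exact_mod_cast (hq0 j).ne'
    simp only [Function.comp, hF]
    rw [if_pos ⟨hd, hne⟩, pow_mul]
    push_cast
    field_simp
  -- summability of g
  have hgnn : ∀ j, 0 ≤ g j := by
    intro j
    apply mul_nonneg (by positivity)
    have := Real.log_nonpos (h1y j).le (by linarith [hy0 j])
    linarith
  have hgle : ∀ j, g j ≤ (1 - x)⁻¹ * x * x ^ j := by
    intro j
    have hyx : x ^ q j ≤ x ^ (j + 1) :=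
      pow_le_pow_of_le_one hx0.le hx1.le (le_of_lt (Nat.lt_pow_self hp.one_lt))
    have hxx : x ^ q j ≤ x := by
      simpa using pow_le_pow_of_le_one hx0.le hx1.le (hq1 j)
    have hlogle : -Real.log (1 - x ^ q j) ≤ x ^ q j / (1 - x) := by
      have h := Real.log_le_sub_one_of_pos (inv_pos.2 (h1y j))
      rw [Real.log_inv] at h
      have h2 : (1 - x ^ q j)⁻¹ - 1 = x ^ q j / (1 - x ^ q j) := by
        rw [inv_eq_one_div, div_sub_one (h1y j).ne']
        congr 1
        ring
      rw [h2] at h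
      calc -Real.log (1 - x ^ q j) ≤ x ^ q j / (1 - x ^ q j) := h
        _ ≤ x ^ q j / (1 - x) :=
          div_le_div_of_nonneg_left (hy0 j).le (by linarith) (by linarith)
    have hinv : ((q j : ℝ))⁻¹ ≤ 1 :=
      inv_le_one_of_one_le₀ (by exact_mod_cast hq1 j)
    calc g j ≤ 1 * (x ^ q j / (1 - x)) := by
          apply mul_le_mul hinv hlogle _ zero_le_one
          have := Real.log_nonpos (h1y j).le (by linarith [hy0 j])
          linarith
      _ ≤ (1 - x)⁻¹ * x * x ^ j := by
          rw [one_mul, div_eq_mul_inv, mul_comm]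
          have : (1 - x)⁻¹ * x * x ^ j = (1 - x)⁻¹ * x ^ (j + 1) := by ring
          rw [this]
          have h1x : (0:ℝ) < 1 - x := by linarith
          exact mul_le_mul_of_nonneg_left hyx (by positivity)
  have hgsum : Summable g :=
    Summable.of_nonneg_of_le hgnn hgle
      (((summable_geometric_of_lt_one hx0.le hx1).mul_left ((1 - x)⁻¹ * x)).congr
        (fun j => by ring))
  -- per-n sum
  have h2 : ∀ n : ℕ, HasSum (fun j => F j n) (((padicValNat p n : ℝ) / n) * x ^ n) := by
    intro n
    rcases eq_or_ne n 0 with rfl | hn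
    · simpa [hF] using (hasSum_zero : HasSum (fun _ : ℕ => (0 : ℝ)) 0)
    · set ν := padicValNat p n with hν
      have hcond : ∀ j, F j n = if j ∈ Finset.range ν then x ^ n / n else 0 := by
        intro j
        simp only [hF, Finset.mem_range]
        by_cases h : q j ∣ n
        · rw [if_pos ⟨h, hn⟩, if_pos ?_]
          have := (padicValNat_dvd_iff_le hn).mp h
          omega
        · rw [if_neg (by tauto), if_neg ?_]
          intro hjν
          exact h ((padicValNat_dvd_iff_le hn).mpr (by omega))
      have hsum : HasSum (fun j => F j n) (∑ j ∈ Finset.range ν, F j n) :=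
        hasSum_sum_of_ne_finset_zero (fun j hj => by rw [hcond j, if_neg hj])
      have heq : ∑ j ∈ Finset.range ν, F j n = (ν : ℝ) / n * x ^ n := by
        rw [Finset.sum_congr rfl (fun j hj => by rw [hcond j, if_pos hj]),
          Finset.sum_const, Finset.card_range, nsmul_eq_mul]
        ring
      rwa [heq] at hsum
  -- Fubini
  have hFsum : Summable (fun r : ℕ × ℕ => F r.1 r.2) := by
    rw [summable_prod_of_nonneg (fun r => hFnn r.1 r.2)]
    exact ⟨fun j => (h1 j).summable, hgsum.congr fun j => ((h1 j).tsum_eq).symm⟩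
  have hcomm : ∑' n, ∑' j, F j n = ∑' j, ∑' n, F j n :=
    Summable.tsum_comm' hFsum (fun j => (h1 j).summable) (fun n => (h2 n).summable)
  -- final assembly
  have hfac : ∀ j : ℕ, (1 - x ^ p ^ (j + 1)) ^ (-(1 / (p : ℝ) ^ (j + 1))) = Real.exp (g j) := by
    intro j
    rw [Real.rpow_def_of_pos (h1y j)]
    congr 1
    simp only [hgdef, hq]
    push_cast
    ring
  have hprod : HasProd (fun j : ℕ => (1 - x ^ p ^ (j + 1)) ^ (-(1 / (p : ℝ) ^ (j + 1))))
      (Real.exp (∑' j, g j)) :=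
    hgsum.hasSum.rexp.congr_fun fun j => hfac j
  refine ⟨hprod.multipliable, ?_⟩
  rw [hprod.tprod_eq, TpR]
  congr 1
  calc ∑' j, g j = ∑' j, ∑' n, F j n := tsum_congr fun j => ((h1 j).tsum_eq).symm
    _ = ∑' n, ∑' j, F j n := hcomm.symm
    _ = ∑' n : ℕ, ((padicValNat p n : ℝ) / n) * x ^ n := tsum_congr fun n => (h2 n).tsum_eq
end

section
/- Let p be a prime and let z be a complex number with |z| < 1. Then \sum_{n\ge 1} (\nu_p(n)/n) z^{pn} = p \cdot \sum_{n\ge 1} (\nu_p(n)/n) z^n + \log(1 - z^p), where \log is the principal branch of the complex logarithm. Equivalently, \log T_p(z^p) = p \log T_p(z) + \log(1 - z^p). -/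
open scoped BigOperators

/-- `T_p(z) = exp(∑_{n ≥ 1} (ν_p(n)/n) z^n)` for `|z| < 1` (the `n = 0` term vanishes). -/
noncomputable def Tp (p : ℕ) (z : ℂ) : ℂ :=
  Complex.exp (∑' n : ℕ, ((padicValNat p n : ℂ) / (n : ℂ)) * z ^ n)

private lemma aux_summable (p : ℕ) (w : ℂ) (hw : ‖w‖ < 1) :
    Summable (fun n : ℕ => ((padicValNat p n : ℂ) / (n : ℂ)) * w ^ n) := by
  apply Summable.of_norm_bounded (g := fun n : ℕ => ‖w‖ ^ n)
    (summable_geometric_of_lt_one (by positivity) hw)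
  · intro n
    rw [norm_mul, norm_pow]
    rcases Nat.eq_zero_or_pos n with rfl | hn
    · simp
    calc ‖(padicValNat p n : ℂ) / (n : ℂ)‖ * ‖w‖ ^ n
        ≤ 1 * ‖w‖ ^ n := by
          gcongr
          rw [norm_div, Complex.norm_natCast, Complex.norm_natCast,
            div_le_one (by exact_mod_cast hn)]
          exact_mod_cast ((padicValNat_le_nat_log n).trans (Nat.log_le_self p n))
      _ = ‖w‖ ^ n := one_mul _

theorem stmt_3 (p : ℕ) (hp : p.Prime) (z : ℂ) (hz : ‖z‖ < 1) :
    (∑' n : ℕ, ((padicValNat p n : ℂ) / (n : ℂ)) * z ^ (p * n)) =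
      (p : ℂ) * (∑' n : ℕ, ((padicValNat p n : ℂ) / (n : ℂ)) * z ^ n) +
        Complex.log (1 - z ^ p) := by
  haveI : Fact p.Prime := ⟨hp⟩
  set g : ℕ → ℂ := fun n => ((padicValNat p n : ℂ) / (n : ℂ)) * z ^ n with hg
  have hzp : ‖z ^ p‖ < 1 := by
    rw [norm_pow]
    exact pow_lt_one₀ (by positivity) hz hp.ne_zero
  -- step 2: tsum over multiples of p equals full tsum
  have hinj : Function.Injective (fun n : ℕ => p * n) :=
    fun a b h => by simpa [hp.ne_zero] using h
  have hsupp : Function.support g ⊆ Set.range (fun n : ℕ => p * n) := by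
    intro m hm
    by_contra hmem
    apply hm
    have hdvd : ¬ p ∣ m := by
      intro ⟨c, hc⟩; exact hmem ⟨c, hc.symm⟩
    simp [hg, padicValNat.eq_zero_of_not_dvd hdvd]
  have h2 : ∑' n : ℕ, g (p * n) = ∑' n : ℕ, g n := hinj.tsum_eq hsupp
  -- step 3: pointwise identity
  have h3 : ∀ n : ℕ, (p : ℂ) * g (p * n) =
      ((padicValNat p n : ℂ) / (n : ℂ)) * z ^ (p * n) + (z ^ p) ^ n / n := by
    intro n
    rcases Nat.eq_zero_or_pos n with rfl | hn
    · simp [hg]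
    have hval : padicValNat p (p * n) = padicValNat p n + 1 := by
      rw [padicValNat.mul hp.ne_zero hn.ne', padicValNat_self]
      ring
    have hn' : (n : ℂ) ≠ 0 := Nat.cast_ne_zero.mpr hn.ne'
    have hp' : (p : ℂ) ≠ 0 := Nat.cast_ne_zero.mpr hp.ne_zero
    rw [hg]
    simp only [hval]
    push_cast
    rw [← pow_mul]
    field_simp
  -- summabilities
  have hs1 : Summable g := aux_summable p z hz
  have hs2 : Summable (fun n : ℕ => ((padicValNat p n : ℂ) / (n : ℂ)) * z ^ (p * n)) := by
    have := aux_summable p (z ^ p) hzp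
    simpa only [← pow_mul, mul_comm p] using this
  have hlog : HasSum (fun n : ℕ => (z ^ p) ^ n / n) (-Complex.log (1 - z ^ p)) :=
    Complex.hasSum_taylorSeries_neg_log (by simpa using hzp)
  -- assemble
  have h4 : (p : ℂ) * ∑' n : ℕ, g n =
      (∑' n : ℕ, ((padicValNat p n : ℂ) / (n : ℂ)) * z ^ (p * n)) +
        (-Complex.log (1 - z ^ p)) := by
    calc (p : ℂ) * ∑' n : ℕ, g n = (p : ℂ) * ∑' n : ℕ, g (p * n) := by rw [h2]
      _ = ∑' n : ℕ, (p : ℂ) * g (p * n) := (tsum_mul_left).symm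
      _ = ∑' n : ℕ, (((padicValNat p n : ℂ) / (n : ℂ)) * z ^ (p * n) + (z ^ p) ^ n / n) := by
          exact tsum_congr h3
      _ = (∑' n : ℕ, ((padicValNat p n : ℂ) / (n : ℂ)) * z ^ (p * n)) +
            (-Complex.log (1 - z ^ p)) := by
          rw [Summable.tsum_add hs2 hlog.summable, hlog.tsum_eq]
  simp only [hg] at h4 ⊢
  linear_combination -h4
end

section
/- Let p be a prime and let z be a complex number with |z| < 1. Then T_p(z)^p \cdot (1 - z^p) = T_p(z^p), i.e., the function T_p satisfies the Mahler-type functional equation T_p(z)^p = T_p(z^p)/(1 - z^p). -/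
open scoped BigOperators

lemma padicValNat_le_self (p n : ℕ) (hp : p.Prime) : padicValNat p n ≤ n := by
  rcases Nat.eq_zero_or_pos n with rfl | hn
  · simp
  calc padicValNat p n ≤ Nat.log p n := padicValNat_le_nat_log n
    _ ≤ n := Nat.log_le_self p n

lemma summable_aux (p : ℕ) (hp : p.Prime) (w : ℂ) (hw : ‖w‖ < 1) :
    Summable (fun n : ℕ => ((padicValNat p n : ℂ) / (n : ℂ)) * w ^ n) := by
  refine Summable.of_norm_bounded (summable_geometric_of_lt_one (by positivity) hw) ?_
  intro n
  rcases Nat.eq_zero_or_pos n with rfl | hn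
  · simp
  have hn' : (0:ℝ) < (n:ℝ) := by exact_mod_cast hn
  rw [norm_mul, norm_div, norm_pow]
  have h1 : ‖((padicValNat p n : ℂ))‖ / ‖(n:ℂ)‖ ≤ 1 := by
    rw [Complex.norm_natCast, Complex.norm_natCast, div_le_one hn']
    exact_mod_cast padicValNat_le_self p n hp
  calc ‖((padicValNat p n : ℂ))‖ / ‖(n:ℂ)‖ * ‖w‖ ^ n ≤ 1 * ‖w‖ ^ n := by
        apply mul_le_mul_of_nonneg_right h1 (pow_nonneg (norm_nonneg w) n)
    _ = ‖w‖ ^ n := by rw [one_mul]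

theorem stmt_4 (p : ℕ) (hp : p.Prime) (z : ℂ) (hz : ‖z‖ < 1) :
    Tp p z ^ p * (1 - z ^ p) = Tp p (z ^ p) := by
  have hp0 : (p : ℂ) ≠ 0 := Nat.cast_ne_zero.mpr hp.ne_zero
  haveI : Fact p.Prime := ⟨hp⟩
  have hzp : ‖z ^ p‖ < 1 := by
    rw [norm_pow]
    exact pow_lt_one₀ (norm_nonneg z) hz hp.pos.ne'
  have hne : (1 : ℂ) - z ^ p ≠ 0 := by
    intro h
    have : z ^ p = 1 := by linear_combination -h
    rw [this] at hzp; simp at hzp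
  set f : ℕ → ℂ := fun n => ((padicValNat p n : ℂ) / (n : ℂ)) * z ^ n with hf
  -- reindex the sum over multiples of p
  have hinj : Function.Injective (fun m : ℕ => p * m) :=
    fun a b h => Nat.eq_of_mul_eq_mul_left hp.pos h
  have hsupp : Function.support f ⊆ Set.range (fun m : ℕ => p * m) := by
    intro n hn
    rcases Nat.eq_zero_or_pos n with rfl | hn1
    · simp [hf] at hn
    have : p ∣ n := by
      by_contra hd
      refine hn ?_
      show ((padicValNat p n : ℂ) / (n : ℂ)) * z ^ n = 0
      rw [padicValNat.eq_zero_of_not_dvd hd]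
      simp
    obtain ⟨m, rfl⟩ := this
    exact ⟨m, rfl⟩
  have hre : ∑' m : ℕ, f (p * m) = ∑' n : ℕ, f n := hinj.tsum_eq hsupp
  -- compute f (p * m)
  have hterm : ∀ m : ℕ, f (p * m)
      = (1/(p:ℂ)) * (((padicValNat p m : ℂ) / (m : ℂ)) * (z ^ p) ^ m)
        + (1/(p:ℂ)) * ((z ^ p) ^ m / (m : ℂ)) := by
    intro m
    rcases Nat.eq_zero_or_pos m with rfl | hm
    · simp [hf]
    have hm0 : (m:ℂ) ≠ 0 := Nat.cast_ne_zero.mpr hm.ne'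
    have hv : padicValNat p (p * m) = padicValNat p m + 1 := by
      rw [padicValNat.mul (Nat.Prime.ne_zero hp) hm.ne', padicValNat.self hp.one_lt]
      ring
    rw [hf]
    simp only [hv, pow_mul, Nat.cast_mul, Nat.cast_add, Nat.cast_one]
    field_simp
  have hs1 : Summable (fun m : ℕ =>
      (1/(p:ℂ)) * (((padicValNat p m : ℂ) / (m : ℂ)) * (z ^ p) ^ m)) :=
    (summable_aux p hp (z ^ p) hzp).mul_left _
  have hs2 : Summable (fun m : ℕ => (1/(p:ℂ)) * ((z ^ p) ^ m / (m : ℂ))) :=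
    ((Complex.hasSum_taylorSeries_neg_log (z := z ^ p)
      (by simpa using hzp)).summable).mul_left _
  have hL : ∑' m : ℕ, ((z ^ p) ^ m / (m : ℂ)) = -Complex.log (1 - z ^ p) :=
    (Complex.hasSum_taylorSeries_neg_log (z := z ^ p) (by simpa using hzp)).tsum_eq
  have key : (p : ℂ) * ∑' n : ℕ, f n
      = (∑' m : ℕ, ((padicValNat p m : ℂ) / (m : ℂ)) * (z ^ p) ^ m)
        - Complex.log (1 - z ^ p) := by
    rw [← hre]
    calc (p:ℂ) * ∑' m : ℕ, f (p * m)
        = (p:ℂ) * ∑' m : ℕ, ((1/(p:ℂ)) * (((padicValNat p m : ℂ) / (m : ℂ)) * (z ^ p) ^ m)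
            + (1/(p:ℂ)) * ((z ^ p) ^ m / (m : ℂ))) := by
          congr 1; exact tsum_congr hterm
      _ = (p:ℂ) * ((1/(p:ℂ)) * (∑' m : ℕ, ((padicValNat p m : ℂ) / (m : ℂ)) * (z ^ p) ^ m)
            + (1/(p:ℂ)) * (∑' m : ℕ, ((z ^ p) ^ m / (m : ℂ)))) := by
          rw [hs1.tsum_add hs2, tsum_mul_left, tsum_mul_left]
      _ = (∑' m : ℕ, ((padicValNat p m : ℂ) / (m : ℂ)) * (z ^ p) ^ m)
            - Complex.log (1 - z ^ p) := by
          rw [hL]; field_simp; ring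
  rw [Tp, Tp, ← Complex.exp_nat_mul, key, Complex.exp_sub, Complex.exp_log hne]
  field_simp
end

section
/- Let p be a prime. In the ring of formal power series ℚ⟦X⟧, let S_p = \sum_{n\ge 1} (\nu_p(n)/n) X^n and let T = exp(S_p), the substitution of S_p into the exponential power series \sum_{k\ge 0} X^k/k!. Then T satisfies the formal functional equation T(X^p) = (1 - X^p) \cdot T^p, where T(X^p) denotes the substitution of X^p into T. -/
open scoped BigOperators

/-- `S_p ∈ ℚ⟦X⟧`, the series with `n`-th coefficient `ν_p(n)/n` (and constant term `0`). -/
noncomputable def Sp (p : ℕ) : PowerSeries ℚ :=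
  PowerSeries.mk fun n => (padicValNat p n : ℚ) / (n : ℚ)

/-- Substitution `f(g)` of a power series `g` with zero constant term into `f`:
the `n`-th coefficient is `∑_{k ≤ n} (coeff k f) · (coeff n (g^k))`. -/
noncomputable def substPS (g f : PowerSeries ℚ) : PowerSeries ℚ :=
  PowerSeries.mk fun n =>
    ∑ k ∈ Finset.range (n + 1), PowerSeries.coeff k f * PowerSeries.coeff n (g ^ k)

/-- `T = exp(S_p)`, the substitution of `S_p` into the exponential power series. -/
noncomputable def Tps (p : ℕ) : PowerSeries ℚ :=
  substPS (Sp p) (PowerSeries.exp ℚ)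

/-- `t_p(n)`, the `n`-th coefficient of `T = exp(S_p)`. -/
noncomputable def tp (p n : ℕ) : ℚ :=
  PowerSeries.coeff n (Tps p)

open PowerSeries Finset

lemma coeff_substPS (g f : ℚ⟦X⟧) (n : ℕ) :
    coeff n (substPS g f) = ∑ k ∈ range (n + 1), coeff k f * coeff n (g ^ k) := by
  rw [substPS, coeff_mk]

lemma coeff_pow_zero_of_lt {f : ℚ⟦X⟧} (hf : constantCoeff f = 0) {n k : ℕ} (h : n < k) :
    coeff n (f ^ k) = 0 := by
  have hX : (X : ℚ⟦X⟧) ^ k ∣ f ^ k := pow_dvd_pow_of_dvd (X_dvd_iff.mpr hf) k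
  exact (X_pow_dvd_iff.mp hX) n h

lemma coeff_exp_succ (i : ℕ) : coeff (i+1) (exp ℚ) * ((i:ℚ)+1) = coeff i (exp ℚ) := by
  simp only [coeff_exp, Nat.factorial_succ, Algebra.algebraMap_self, RingHom.id_apply]
  have h1 : ((i:ℚ)+1) ≠ 0 := by positivity
  have h2 : ((i.factorial :ℚ)) ≠ 0 := Nat.cast_ne_zero.mpr i.factorial_ne_zero
  push_cast
  field_simp

lemma chainExp (f : ℚ⟦X⟧) (hf : constantCoeff f = 0) :
    derivative ℚ (substPS f (exp ℚ)) = derivative ℚ f * substPS f (exp ℚ) := by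
  ext n
  rw [coeff_derivative, coeff_substPS, sum_mul]
  have step : ∀ k ∈ range (n+2), coeff k (exp ℚ) * coeff (n+1) (f^k) * ((n:ℚ)+1)
      = coeff k (exp ℚ) * ((k:ℚ) * coeff n (f^(k-1) * derivative ℚ f)) := by
    intro k _
    have h1 : coeff (n+1) (f^k) * ((n:ℚ)+1) = coeff n (derivative ℚ (f^k)) := by
      rw [coeff_derivative]
    rw [mul_assoc, h1, Derivation.leibniz_pow, nsmul_eq_mul, smul_eq_mul,
      ← map_natCast (C (R := ℚ)) k, coeff_C_mul]
  rw [sum_congr rfl step, Finset.sum_range_succ']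
  simp only [Nat.cast_zero, zero_mul, mul_zero, add_zero, Nat.add_sub_cancel]
  have step2 : ∀ i ∈ range (n+1), coeff (i+1) (exp ℚ) * ((((i+1):ℕ):ℚ) * coeff n (f^i * derivative ℚ f))
      = coeff i (exp ℚ) * coeff n (derivative ℚ f * f^i) := by
    intro i _
    push_cast
    rw [← mul_assoc, coeff_exp_succ, mul_comm (f^i)]
  rw [sum_congr rfl step2]
  rw [coeff_mul]
  have hext : ∀ x ∈ antidiagonal n, coeff x.1 (derivative ℚ f) * coeff x.2 (substPS f (exp ℚ))
      = ∑ j ∈ range (n+1), coeff x.1 (derivative ℚ f) * (coeff j (exp ℚ) * coeff x.2 (f^j)) := by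
    intro x hx
    rw [coeff_substPS, mul_sum]
    apply sum_subset
    · apply range_subset_range.mpr
      have := Finset.HasAntidiagonal.antidiagonal.snd_le hx
      omega
    · intro j _ hj
      rw [mem_range, not_lt] at hj
      rw [coeff_pow_zero_of_lt hf (by omega), mul_zero, mul_zero]
  rw [sum_congr rfl hext, sum_comm]
  apply sum_congr rfl
  intro j _
  rw [coeff_mul, mul_sum]
  apply sum_congr rfl
  intro x _
  ring

lemma coeff_expand {p : ℕ} (hp : 0 < p) (f : ℚ⟦X⟧) (n : ℕ) :
    coeff n (substPS ((X:ℚ⟦X⟧)^p) f) = if p ∣ n then coeff (n/p) f else 0 := by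
  rw [coeff_substPS]
  have hc : ∀ k, coeff n (((X:ℚ⟦X⟧)^p)^k) = if n = p*k then 1 else 0 := by
    intro k; rw [← pow_mul, coeff_X_pow]
  split_ifs with h
  · obtain ⟨m, rfl⟩ := h
    rw [Finset.sum_eq_single m]
    · rw [hc, if_pos rfl, mul_one, Nat.mul_div_cancel_left _ hp]
    · intro k _ hk
      rw [hc, if_neg, mul_zero]
      intro he
      exact hk (Nat.eq_of_mul_eq_mul_left hp he.symm)
    · intro hm
      exfalso; apply hm; rw [mem_range]
      have := Nat.le_mul_of_pos_left m hp
      omega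
  · apply Finset.sum_eq_zero
    intro k _
    rw [hc, if_neg (fun he => h ⟨k, he⟩), mul_zero]

lemma expand_mul {p : ℕ} (hp : 0 < p) (f g : ℚ⟦X⟧) :
    substPS ((X:ℚ⟦X⟧)^p) (f * g) = substPS ((X:ℚ⟦X⟧)^p) f * substPS ((X:ℚ⟦X⟧)^p) g := by
  ext n
  have rhs_eq : coeff n (substPS ((X:ℚ⟦X⟧)^p) f * substPS ((X:ℚ⟦X⟧)^p) g)
      = ∑ x ∈ antidiagonal n,
          (if p ∣ x.1 then coeff (x.1/p) f else 0) * (if p ∣ x.2 then coeff (x.2/p) g else 0) := by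
    rw [coeff_mul]
    exact sum_congr rfl fun x _ => by rw [coeff_expand hp, coeff_expand hp]
  rw [rhs_eq, coeff_expand hp]
  split_ifs with h
  · obtain ⟨m, rfl⟩ := h
    rw [Nat.mul_div_cancel_left _ hp, coeff_mul]
    apply Finset.sum_bij_ne_zero (fun a _ _ => (p * a.1, p * a.2))
    · rintro ⟨a, b⟩ ha _
      rw [HasAntidiagonal.mem_antidiagonal] at ha ⊢
      rw [← Nat.mul_add, ha]
    · rintro ⟨a, b⟩ h1 h2 ⟨c, d⟩ h3 h4 he
      simp only [Prod.mk.injEq] at he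
      have e1 : a = c := Nat.eq_of_mul_eq_mul_left hp he.1
      have e2 : b = d := Nat.eq_of_mul_eq_mul_left hp he.2
      simp [e1, e2]
    · rintro ⟨c, d⟩ hcd hne
      have hc : p ∣ c := by by_contra hn; simp [hn] at hne
      have hd : p ∣ d := by by_contra hn; simp [hn] at hne
      obtain ⟨a, rfl⟩ := hc; obtain ⟨b, rfl⟩ := hd
      rw [HasAntidiagonal.mem_antidiagonal] at hcd
      refine ⟨(a, b), ?_, ?_, rfl⟩
      · rw [HasAntidiagonal.mem_antidiagonal]
        have h5 : p * (a + b) = p * m := by rw [Nat.mul_add, hcd]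
        exact Nat.eq_of_mul_eq_mul_left hp h5
      · intro h0
        apply hne
        rw [if_pos ⟨a, rfl⟩, if_pos ⟨b, rfl⟩, Nat.mul_div_cancel_left _ hp, Nat.mul_div_cancel_left _ hp]
        exact h0
    · rintro ⟨a, b⟩ _ _
      rw [if_pos ⟨a, rfl⟩, if_pos ⟨b, rfl⟩, Nat.mul_div_cancel_left _ hp, Nat.mul_div_cancel_left _ hp]
  · symm
    apply Finset.sum_eq_zero
    rintro ⟨a, b⟩ hab
    rw [HasAntidiagonal.mem_antidiagonal] at hab
    by_cases ha : p ∣ a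
    · have hb : ¬ p ∣ b := fun hb => h (hab ▸ Nat.dvd_add ha hb)
      rw [if_neg hb, mul_zero]
    · rw [if_neg ha, zero_mul]

lemma derivative_expand {p : ℕ} (hp : 0 < p) (f : ℚ⟦X⟧) :
    derivative ℚ (substPS ((X:ℚ⟦X⟧)^p) f)
      = (p : ℚ⟦X⟧) * X^(p-1) * substPS ((X:ℚ⟦X⟧)^p) (derivative ℚ f) := by
  ext n
  rw [coeff_derivative, coeff_expand hp, mul_assoc, ← map_natCast (C (R := ℚ)) p, coeff_C_mul,
    coeff_X_pow_mul', coeff_expand hp]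
  by_cases h : p ∣ (n+1)
  · obtain ⟨m, hm⟩ := h
    have hmpos : 0 < m := Nat.pos_of_ne_zero (by rintro rfl; simp at hm)
    have hple : p - 1 ≤ n := by
      have : p * 1 ≤ p * m := Nat.mul_le_mul_left p hmpos
      omega
    have key : n - (p-1) = p * (m-1) := by
      have h3 : p * m = p * (m-1) + p := by
        have hm1 : m - 1 + 1 = m := by omega
        calc p * m = p * ((m-1)+1) := by rw [hm1]
        _ = p * (m-1) + p := by ring
      omega
    rw [if_pos ⟨m, hm⟩, if_pos hple, key, if_pos (dvd_mul_right p (m-1)), coeff_derivative,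
      hm, Nat.mul_div_cancel_left _ hp, Nat.mul_div_cancel_left _ hp]
    have hmm : m - 1 + 1 = m := by omega
    rw [hmm]
    have hcast : ((n:ℚ)+1) = (p:ℚ) * m := by exact_mod_cast congrArg (Nat.cast (R := ℚ)) hm
    have hcast2 : ((m-1:ℕ):ℚ) + 1 = (m:ℚ) := by
      have : ((m-1:ℕ):ℚ) = (m:ℚ) - 1 := by
        rw [Nat.cast_sub hmpos]; norm_num
      rw [this]; ring
    rw [hcast, hcast2]
    ring
  · rw [if_neg h, zero_mul]
    split_ifs with h1 h2
    · exfalso; apply h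
      obtain ⟨c, hc⟩ := h2
      refine ⟨c+1, ?_⟩
      have h3 : p * (c+1) = p * c + p := by ring
      omega
    · simp
    · simp

noncomputable def Gps (p : ℕ) : ℚ⟦X⟧ := PowerSeries.mk fun n => if p ∣ (n+1) then 1 else 0

lemma coeff_deriv_Sp (p n : ℕ) :
    coeff n (derivative ℚ (Sp p)) = (padicValNat p (n+1) : ℚ) := by
  rw [coeff_derivative, Sp, coeff_mk]
  have h : (((n:ℚ))+1) ≠ 0 := by positivity
  push_cast
  field_simp

lemma K1 {p : ℕ} (hp : p.Prime) :
    derivative ℚ (Sp p) = X^(p-1) * substPS ((X:ℚ⟦X⟧)^p) (derivative ℚ (Sp p)) + Gps p := by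
  haveI : Fact p.Prime := ⟨hp⟩
  have hp1 : 0 < p := hp.pos
  ext n
  rw [map_add, coeff_deriv_Sp, coeff_X_pow_mul', Gps, coeff_mk]
  by_cases h : p ∣ (n+1)
  · obtain ⟨m, hm⟩ := h
    have hmpos : 0 < m := Nat.pos_of_ne_zero (by rintro rfl; simp at hm)
    have hple : p - 1 ≤ n := by
      have : p * 1 ≤ p * m := Nat.mul_le_mul_left p hmpos
      omega
    have key : n - (p-1) = p * (m-1) := by
      have h3 : p * m = p * (m-1) + p := by
        have hm1 : m - 1 + 1 = m := by omega
        calc p * m = p * ((m-1)+1) := by rw [hm1]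
        _ = p * (m-1) + p := by ring
      omega
    rw [if_pos hple, key, coeff_expand hp1, if_pos (dvd_mul_right p (m-1)),
      Nat.mul_div_cancel_left _ hp1, coeff_deriv_Sp, if_pos (Dvd.intro m hm.symm : p ∣ n+1)]
    have hmm : m - 1 + 1 = m := by omega
    rw [hmm, hm]
    have hval : padicValNat p (p * m) = padicValNat p m + 1 := by
      rw [padicValNat.mul (by omega) (by omega), padicValNat_self]
      ring
    rw [hval]
    push_cast
    ring
  · have hG : (if p ∣ n+1 then (1:ℚ) else 0) = 0 := if_neg h
    rw [hG, add_zero, padicValNat.eq_zero_of_not_dvd h, coeff_expand hp1]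
    split_ifs with h1 h2
    · exfalso; apply h
      obtain ⟨c, hc⟩ := h2
      refine ⟨c+1, ?_⟩
      have h3 : p * (c+1) = p * c + p := by ring
      omega
    · rfl
    · rfl

lemma K2 {p : ℕ} (hp : 0 < p) :
    (1 - (X:ℚ⟦X⟧)^p) * Gps p = X^(p-1) := by
  ext n
  rw [sub_mul, one_mul, map_sub, coeff_X_pow_mul', Gps, coeff_mk, coeff_X_pow]
  by_cases h1 : p ≤ n
  · rw [if_pos h1, coeff_mk]
    have hiff : (p ∣ n + 1) ↔ (p ∣ (n - p) + 1) := by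
      constructor
      · rintro ⟨c, hc⟩
        have hcpos : 0 < c := Nat.pos_of_ne_zero (by rintro rfl; simp at hc)
        refine ⟨c-1, ?_⟩
        have h3 : p * c = p * (c-1) + p := by
          have : c - 1 + 1 = c := by omega
          calc p * c = p * ((c-1)+1) := by rw [this]
          _ = p * (c-1) + p := by ring
        omega
      · rintro ⟨c, hc⟩
        refine ⟨c+1, ?_⟩
        have h3 : p * (c+1) = p * c + p := by ring
        omega
    have hne : ¬ n = p - 1 := by omega
    rw [if_neg hne]
    by_cases h2 : p ∣ n + 1
    · rw [if_pos h2, if_pos (hiff.mp h2), sub_self]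
    · rw [if_neg h2, if_neg (fun hh => h2 (hiff.mpr hh)), sub_self]
  · rw [if_neg h1, sub_zero]
    by_cases h2 : n = p - 1
    · rw [if_pos, if_pos h2]
      subst h2
      exact ⟨1, by omega⟩
    · rw [if_neg, if_neg h2]
      intro hd
      obtain ⟨c, hc⟩ := hd
      have hcpos : 0 < c := Nat.pos_of_ne_zero (by rintro rfl; simp at hc)
      have : p * 1 ≤ p * c := Nat.mul_le_mul_left p hcpos
      omega

lemma eq_of_logderiv (f g : ℚ⟦X⟧) (h0 : constantCoeff f = 1) (h1 : constantCoeff g = 1)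
    (hd : derivative ℚ f * g = derivative ℚ g * f) : f = g := by
  suffices H : ∀ n, ∀ m ≤ n, coeff m f = coeff m g by
    ext n; exact H n n le_rfl
  intro n
  induction n with
  | zero =>
    intro m hm
    interval_cases m
    rw [coeff_zero_eq_constantCoeff, h0, h1]
  | succ n ih =>
    intro m hm
    rcases Nat.lt_or_ge m (n+1) with h | h
    · exact ih m (by omega)
    · have h : m = n + 1 := by omega
      subst h
      have hc := congrArg (coeff n) hd
      rw [coeff_mul, coeff_mul] at hc
      have hmem : ((n, 0) : ℕ × ℕ) ∈ antidiagonal n := by simp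
      rw [← Finset.sum_erase_add _ _ hmem, ← Finset.sum_erase_add _ _ hmem] at hc
      have key : ∀ x ∈ (antidiagonal n).erase (n, 0),
          coeff x.1 (derivative ℚ f) * coeff x.2 g
            = coeff x.1 (derivative ℚ g) * coeff x.2 f := by
        intro x hx
        have hxa := mem_antidiagonal.mp (mem_of_mem_erase hx)
        have hxne := ne_of_mem_erase hx
        have hx1 : x.1 < n := by
          rcases Nat.lt_or_ge x.1 n with hlt | hge
          · exact hlt
          · exfalso; apply hxne
            have e1 : x.1 = n := by omega
            have e2 : x.2 = 0 := by omega
            exact Prod.ext e1 e2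
        rw [coeff_derivative, coeff_derivative, ih (x.1+1) (by omega), ih x.2 (by omega)]
      rw [Finset.sum_congr rfl key] at hc
      have hc2 := add_left_cancel hc
      rw [coeff_derivative, coeff_derivative, coeff_zero_eq_constantCoeff, h0, h1] at hc2
      have hne : ((n:ℚ) + 1) ≠ 0 := by positivity
      exact mul_right_cancel₀ hne (by simpa using hc2 :
        coeff (n+1) f * ((n:ℚ)+1) = coeff (n+1) g * ((n:ℚ)+1))

lemma constCoeff_Sp (p : ℕ) : constantCoeff (Sp p) = 0 := by
  rw [← coeff_zero_eq_constantCoeff, Sp, coeff_mk]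
  simp

lemma constCoeff_Tps (p : ℕ) : constantCoeff (Tps p) = 1 := by
  rw [← coeff_zero_eq_constantCoeff, Tps, coeff_substPS]
  simp [coeff_exp]

theorem stmt_5 (p : ℕ) (hp : p.Prime) :
    substPS ((PowerSeries.X : PowerSeries ℚ) ^ p) (Tps p) =
      (1 - (PowerSeries.X : PowerSeries ℚ) ^ p) * Tps p ^ p := by
  haveI : Fact p.Prime := ⟨hp⟩
  have hp1 : 0 < p := hp.pos
  have hS0 : constantCoeff (Sp p) = 0 := constCoeff_Sp p
  have hT' : derivative ℚ (Tps p) = derivative ℚ (Sp p) * Tps p := chainExp (Sp p) hS0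
  have hL0 : constantCoeff (substPS ((X:ℚ⟦X⟧)^p) (Tps p)) = 1 := by
    rw [← coeff_zero_eq_constantCoeff, coeff_expand hp1, if_pos (dvd_zero p), Nat.zero_div,
      coeff_zero_eq_constantCoeff, constCoeff_Tps]
  have hR0 : constantCoeff ((1 - (X:ℚ⟦X⟧)^p) * Tps p ^ p) = 1 := by
    rw [map_mul, map_sub, map_one, map_pow, map_pow, constantCoeff_X, constCoeff_Tps,
      zero_pow (by omega : p ≠ 0), one_pow, sub_zero, one_mul]
  have hK : (1 - (X:ℚ⟦X⟧)^p) * derivative ℚ (Sp p)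
      = X^(p-1) + (1 - X^p) * X^(p-1) * substPS ((X:ℚ⟦X⟧)^p) (derivative ℚ (Sp p)) := by
    linear_combination (1 - (X:ℚ⟦X⟧)^p) * (K1 hp) + K2 hp1
  have hL' : derivative ℚ (substPS ((X:ℚ⟦X⟧)^p) (Tps p))
      = (p:ℚ⟦X⟧) * X^(p-1) * (substPS ((X:ℚ⟦X⟧)^p) (derivative ℚ (Sp p)) * substPS ((X:ℚ⟦X⟧)^p) (Tps p)) := by
    rw [derivative_expand hp1, hT', expand_mul hp1]
  have hX' : derivative ℚ ((1:ℚ⟦X⟧) - X^p) = -((p:ℚ⟦X⟧) * X^(p-1)) := by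
    rw [map_sub]
    rw [Derivation.leibniz_pow, derivative_X, smul_eq_mul, mul_one, nsmul_eq_mul]
    simp
  have hTp' : derivative ℚ (Tps p ^ p) = (p:ℚ⟦X⟧) * derivative ℚ (Sp p) * Tps p ^ p := by
    rw [Derivation.leibniz_pow, hT', nsmul_eq_mul, smul_eq_mul]
    have hpow : Tps p ^ (p-1) * Tps p = Tps p ^ p := by
      rw [← pow_succ]
      congr 1
      omega
    calc (p:ℚ⟦X⟧) * (Tps p ^ (p-1) * (derivative ℚ (Sp p) * Tps p))
        = (p:ℚ⟦X⟧) * derivative ℚ (Sp p) * (Tps p ^ (p-1) * Tps p) := by ring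
      _ = (p:ℚ⟦X⟧) * derivative ℚ (Sp p) * Tps p ^ p := by rw [hpow]
  have hR' : derivative ℚ ((1 - (X:ℚ⟦X⟧)^p) * Tps p ^ p)
      = -((p:ℚ⟦X⟧) * X^(p-1)) * Tps p ^ p
        + (1 - X^p) * ((p:ℚ⟦X⟧) * derivative ℚ (Sp p) * Tps p ^ p) := by
    rw [Derivation.leibniz, smul_eq_mul, smul_eq_mul, hX', hTp']
    ring
  apply eq_of_logderiv _ _ hL0 hR0
  rw [hL', hR']
  linear_combination (-((p:ℚ⟦X⟧) * Tps p ^ p * substPS ((X:ℚ⟦X⟧)^p) (Tps p))) * hK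
end

section
/- Let p be a prime, let T = exp(S_p) \in ℚ⟦X⟧ and let t_p(n) denote the n-th coefficient of T. Then for every n \ge 1, n \cdot t_p(n) = \sum_{(j,m): j \ge 1,\; m \ge 1,\; m p^j \le n} t_p(n - m p^j), the (finite) sum ranging over all pairs of positive integers (j, m) with m p^j \le n. -/
open scoped BigOperators

lemma Sp_coeff_zero (p : ℕ) : PowerSeries.constantCoeff (Sp p) = 0 := by
  simp [Sp, ← PowerSeries.coeff_zero_eq_constantCoeff_apply]

lemma Sp_pow_coeff_eq_zero (p k n : ℕ) (h : n < k) :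
    PowerSeries.coeff n (Sp p ^ k) = 0 := by
  have hX : (PowerSeries.X : PowerSeries ℚ) ∣ Sp p :=
    PowerSeries.X_dvd_iff.mpr (Sp_coeff_zero p)
  have : (PowerSeries.X : PowerSeries ℚ) ^ k ∣ Sp p ^ k := pow_dvd_pow_of_dvd hX k
  exact PowerSeries.X_pow_dvd_iff.mp this n h

lemma key (p k n : ℕ) (hn : 1 ≤ n) :
    (n : ℚ) * PowerSeries.coeff n (Sp p ^ (k + 1)) =
      (k + 1 : ℚ) * ∑ i ∈ Finset.range n,
        PowerSeries.coeff i (Sp p ^ k) * (padicValNat p (n - i) : ℚ) := by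
  have hD : (PowerSeries.derivative ℚ) (Sp p ^ (k+1)) =
      (k+1) • ((Sp p) ^ k • (PowerSeries.derivative ℚ) (Sp p)) := by
    simpa using Derivation.leibniz_pow (PowerSeries.derivative ℚ) (Sp p) (n := k+1)
  have hn1 : n - 1 + 1 = n := by omega
  have hc : ((n - 1 : ℕ) : ℚ) + 1 = (n : ℚ) := by
    rw [Nat.cast_sub hn]; ring
  have h1 : PowerSeries.coeff (n - 1) ((PowerSeries.derivative ℚ) (Sp p ^ (k+1)))
      = PowerSeries.coeff n (Sp p ^ (k+1)) * n := by
    rw [PowerSeries.coeff_derivative, hn1, hc]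
  rw [hD, map_nsmul, smul_eq_mul (a := Sp p ^ k)] at h1
  rw [mul_comm, ← h1, nsmul_eq_mul]
  push_cast
  congr 1
  rw [PowerSeries.coeff_mul, Finset.Nat.sum_antidiagonal_eq_sum_range_succ_mk,
    Nat.succ_eq_add_one, hn1]
  refine Finset.sum_congr rfl fun i hi => ?_
  rw [PowerSeries.coeff_derivative]
  simp only [Sp, PowerSeries.coeff_mk]
  have hi' : i < n := Finset.mem_range.mp hi
  have h2 : n - 1 - i + 1 = n - i := by omega
  rw [h2]
  have h3 : ((n - 1 - i : ℕ) : ℚ) + 1 = ((n - i : ℕ) : ℚ) := by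
    exact_mod_cast congrArg (Nat.cast : ℕ → ℚ) h2
  rw [h3]
  have hne : ((n - i : ℕ) : ℚ) ≠ 0 := by
    have h4 : 0 < n - i := by omega
    exact_mod_cast h4.ne'
  rw [div_mul_cancel₀ _ hne]

lemma exp_coeff_succ_mul (k : ℕ) :
    PowerSeries.coeff (k+1) (PowerSeries.exp ℚ) * ((k : ℚ) + 1)
      = PowerSeries.coeff k (PowerSeries.exp ℚ) := by
  simp only [PowerSeries.coeff_exp, Nat.factorial_succ, Algebra.algebraMap_self, RingHom.id_apply]
  have h1 : ((k+1).factorial : ℚ) ≠ 0 := by exact_mod_cast (k+1).factorial_ne_zero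
  have h2 : ((k).factorial : ℚ) ≠ 0 := by exact_mod_cast (k).factorial_ne_zero
  push_cast at h1 ⊢
  field_simp

lemma tp_eq (p m : ℕ) : tp p m = ∑ k ∈ Finset.range (m+1),
    PowerSeries.coeff k (PowerSeries.exp ℚ) * PowerSeries.coeff m (Sp p ^ k) := by
  simp [tp, Tps, substPS]

lemma step1 (p n : ℕ) (hn : 1 ≤ n) :
    (n : ℚ) * tp p n = ∑ i ∈ Finset.range n, tp p i * (padicValNat p (n - i) : ℚ) := by
  rw [tp_eq p n, Finset.mul_sum, Finset.sum_range_succ']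
  have h0 : (n:ℚ) * (PowerSeries.coeff 0 (PowerSeries.exp ℚ)
      * PowerSeries.coeff n ((Sp p) ^ 0)) = 0 := by
    have : PowerSeries.coeff n (1 : PowerSeries ℚ) = 0 := by
      rw [PowerSeries.coeff_one, if_neg (by omega : n ≠ 0)]
    simp [this]
  rw [h0, add_zero]
  have hterm : ∀ k ∈ Finset.range n,
      (n:ℚ) * (PowerSeries.coeff (k+1) (PowerSeries.exp ℚ)
        * PowerSeries.coeff n ((Sp p) ^ (k+1)))
      = ∑ i ∈ Finset.range n, PowerSeries.coeff k (PowerSeries.exp ℚ)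
          * PowerSeries.coeff i (Sp p ^ k) * (padicValNat p (n - i) : ℚ) := by
    intro k _
    have := key p k n hn
    calc (n:ℚ) * (PowerSeries.coeff (k+1) (PowerSeries.exp ℚ)
          * PowerSeries.coeff n ((Sp p) ^ (k+1)))
        = PowerSeries.coeff (k+1) (PowerSeries.exp ℚ)
            * ((n:ℚ) * PowerSeries.coeff n ((Sp p) ^ (k+1))) := by ring
      _ = PowerSeries.coeff (k+1) (PowerSeries.exp ℚ) * ((k + 1 : ℚ)
            * ∑ i ∈ Finset.range n,
              PowerSeries.coeff i (Sp p ^ k) * (padicValNat p (n - i) : ℚ)) := by rw [this]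
      _ = (PowerSeries.coeff (k+1) (PowerSeries.exp ℚ) * ((k:ℚ) + 1))
            * ∑ i ∈ Finset.range n,
              PowerSeries.coeff i (Sp p ^ k) * (padicValNat p (n - i) : ℚ) := by ring
      _ = _ := by
            rw [exp_coeff_succ_mul, Finset.mul_sum]
            exact Finset.sum_congr rfl fun i _ => by ring
  rw [Finset.sum_congr rfl hterm, Finset.sum_comm]
  refine Finset.sum_congr rfl fun i hi => ?_
  have hi' : i < n := Finset.mem_range.mp hi
  have hsub : Finset.range (i+1) ⊆ Finset.range n := Finset.range_subset_range.mpr (by omega)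
  have hinner : ∑ k ∈ Finset.range n, PowerSeries.coeff k (PowerSeries.exp ℚ)
      * PowerSeries.coeff i (Sp p ^ k) = tp p i := by
    rw [tp_eq p i]
    symm
    refine Finset.sum_subset hsub (fun k hk hk2 => ?_)
    have hik : i < k := by
      simp only [Finset.mem_range] at hk2
      omega
    rw [Sp_pow_coeff_eq_zero p k i hik, mul_zero]
  rw [← Finset.sum_mul, hinner]

lemma filter_eq (p n m : ℕ) (hp : p.Prime) (hm : 1 ≤ m) (hmn : m ≤ n) :
    (Finset.Icc 1 n).filter (fun j => p ^ j ∣ m) = Finset.Icc 1 (padicValNat p m) := by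
  haveI : Fact p.Prime := ⟨hp⟩
  have hν : padicValNat p m ≤ n := by
    have h1 := pow_padicValNat_dvd (p := p) (n := m)
    have h2 : p ^ padicValNat p m ≤ m := Nat.le_of_dvd (by omega) h1
    have h3 : padicValNat p m < p ^ padicValNat p m := Nat.lt_pow_self hp.one_lt
    omega
  ext j
  simp only [Finset.mem_filter, Finset.mem_Icc]
  constructor
  · rintro ⟨⟨hj1, hj2⟩, hj3⟩
    exact ⟨hj1, (padicValNat_dvd_iff_le (by omega)).mp hj3⟩
  · rintro ⟨hj1, hj2⟩
    exact ⟨⟨hj1, by omega⟩, (padicValNat_dvd_iff_le (by omega)).mpr hj2⟩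

theorem stmt_8 (p : ℕ) (hp : p.Prime) (n : ℕ) (hn : 1 ≤ n) :
    (n : ℚ) * tp p n =
      ∑ q ∈ (Finset.range (n + 1) ×ˢ Finset.range (n + 1)).filter
          (fun q => 1 ≤ q.1 ∧ 1 ≤ q.2 ∧ q.2 * p ^ q.1 ≤ n),
        tp p (n - q.2 * p ^ q.1) := by
  rw [step1 p n hn]
  have hA : ∑ i ∈ Finset.range n, tp p i * (padicValNat p (n - i) : ℚ)
      = ∑ m ∈ Finset.Icc 1 n, (padicValNat p m : ℚ) * tp p (n - m) := by
    refine Finset.sum_nbij' (fun i => n - i) (fun m => n - m) ?_ ?_ ?_ ?_ ?_ <;>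
      intro a ha <;>
      simp only [Finset.mem_range, Finset.mem_Icc] at ha ⊢
    · omega
    · omega
    · omega
    · omega
    · have : n - (n - a) = a := by omega
      rw [this]; ring
  rw [hA]
  have hB : ∀ m ∈ Finset.Icc 1 n, (padicValNat p m : ℚ) * tp p (n - m)
      = ∑ j ∈ Finset.Icc 1 n, if p ^ j ∣ m then tp p (n - m) else 0 := by
    intro m hm
    rw [Finset.mem_Icc] at hm
    rw [← Finset.sum_filter, filter_eq p n m hp hm.1 hm.2, Finset.sum_const,
      Nat.card_Icc, nsmul_eq_mul]
    norm_num
  rw [Finset.sum_congr rfl hB, Finset.sum_comm, ← Finset.sum_product']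
  rw [← Finset.sum_filter]
  refine Finset.sum_nbij' (fun q => (q.1, q.2 / p ^ q.1)) (fun q => (q.1, q.2 * p ^ q.1))
    ?_ ?_ ?_ ?_ ?_ <;>
    rintro ⟨j, m⟩ hq <;>
    simp only [Finset.mem_filter, Finset.mem_product, Finset.mem_Icc, Finset.mem_range] at hq ⊢
  · obtain ⟨⟨⟨hj1, hj2⟩, ⟨hm1, hm2⟩⟩, hdvd⟩ := hq
    have hple : p ^ j ≤ m := Nat.le_of_dvd (by omega) hdvd
    have hppos : 0 < p ^ j := Nat.pow_pos hp.pos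
    refine ⟨⟨by omega, ?_⟩, hj1, ?_, ?_⟩
    · have : m / p ^ j ≤ m := Nat.div_le_self _ _
      omega
    · exact Nat.one_le_div_iff hppos |>.mpr hple
    · rw [Nat.div_mul_cancel hdvd]; omega
  · obtain ⟨⟨hj2, hm2⟩, hj1, hm1, hle⟩ := hq
    have hppos : 0 < p ^ j := Nat.pow_pos hp.pos
    refine ⟨⟨⟨hj1, by omega⟩, ?_, hle⟩, Dvd.intro m (mul_comm (p ^ j) m)⟩
    · exact Nat.one_le_iff_ne_zero.mpr (by positivity)
  · obtain ⟨⟨⟨hj1, hj2⟩, ⟨hm1, hm2⟩⟩, hdvd⟩ := hq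
    exact Prod.ext rfl (Nat.div_mul_cancel hdvd)
  · obtain ⟨⟨hj2, hm2⟩, hj1, hm1, hle⟩ := hq
    have hppos : 0 < p ^ j := Nat.pow_pos hp.pos
    exact Prod.ext rfl (by rw [mul_comm]; exact Nat.mul_div_cancel_left m hppos)
  · obtain ⟨⟨⟨hj1, hj2⟩, ⟨hm1, hm2⟩⟩, hdvd⟩ := hq
    rw [Nat.div_mul_cancel hdvd]
end

section
/- Let p be a prime, let T = exp(S_p) \in ℚ⟦X⟧ and let t_p(n) denote the n-th coefficient of T. If n \ge 1 and p does not divide n, then t_p(n) = 0. Consequently the power series T contains only terms whose exponents are multiples of p. -/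
open scoped BigOperators

/-- Property: all coefficients supported on multiples of `p`. -/
def SuppP (p : ℕ) (g : PowerSeries ℚ) : Prop :=
  ∀ n : ℕ, ¬ p ∣ n → PowerSeries.coeff n g = 0

lemma suppP_one (p : ℕ) : SuppP p 1 := by
  intro n hn
  have hne : n ≠ 0 := fun h => hn (h ▸ dvd_zero p)
  rw [PowerSeries.coeff_one, if_neg hne]

lemma suppP_mul {p : ℕ} {g h : PowerSeries ℚ} (hg : SuppP p g) (hh : SuppP p h) :
    SuppP p (g * h) := by
  intro n hn
  rw [PowerSeries.coeff_mul]
  apply Finset.sum_eq_zero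
  intro x hx
  replace hx : x.1 + x.2 = n := by simpa using hx
  by_cases h1 : p ∣ x.1
  · by_cases h2 : p ∣ x.2
    · exact absurd (hx ▸ dvd_add h1 h2) hn
    · rw [hh x.2 h2, mul_zero]
  · rw [hg x.1 h1, zero_mul]

lemma suppP_pow {p : ℕ} {g : PowerSeries ℚ} (hg : SuppP p g) (k : ℕ) :
    SuppP p (g ^ k) := by
  induction k with
  | zero => simpa using suppP_one p
  | succ k ih => rw [pow_succ]; exact suppP_mul ih hg

lemma suppP_Sp (p : ℕ) (hp : p.Prime) : SuppP p (Sp p) := by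
  intro n hn
  have : haveI := Fact.mk hp; padicValNat p n = 0 := padicValNat.eq_zero_of_not_dvd hn
  simp [Sp, this]

theorem stmt_9 (p : ℕ) (hp : p.Prime) :
    (∀ n : ℕ, 1 ≤ n → ¬ p ∣ n → tp p n = 0) ∧
    (∀ n : ℕ, tp p n ≠ 0 → p ∣ n ∨ n = 0) := by
  have key : ∀ n : ℕ, ¬ p ∣ n → tp p n = 0 := by
    intro n hn
    unfold tp Tps substPS
    rw [PowerSeries.coeff_mk]
    apply Finset.sum_eq_zero
    intro k _
    rw [suppP_pow (suppP_Sp p hp) k n hn, mul_zero]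
  refine ⟨fun n _ hn => key n hn, fun n hne => ?_⟩
  by_contra h
  push_neg at h
  exact hne (key n h.1)
end

section
/- Let p be a prime and define T_p on the open unit disk of ℂ by T_p(z) = exp(\sum_{n\ge 1} (\nu_p(n)/n) z^n). Then the unit circle is a natural boundary for T_p: if U \subseteq ℂ is an open connected set containing the open unit ball B(0,1), and g : ℂ \to ℂ is analytic on U with g(z) = T_p(z) for all z \in B(0,1), then U = B(0,1). -/
open scoped BigOperators

open Complex Filter Topology Metric

namespace Stmt17Aux

noncomputable def cc (p : ℕ) (z : ℂ) (k n : ℕ) : ℂ :=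
  if p ^ (k + 1) ∣ n then z ^ n * (n : ℂ)⁻¹ else 0

lemma hasSum_row (p : ℕ) (hp : p.Prime) (z : ℂ) (n : ℕ) :
    HasSum (fun k => cc p z k n) (((padicValNat p n : ℂ) / n) * z ^ n) := by
  haveI : Fact p.Prime := ⟨hp⟩
  by_cases hn : n = 0
  · subst hn
    have h0 : (fun k => cc p z k 0) = fun _ => (0 : ℂ) := by
      funext k; simp [cc]
    rw [h0]
    simpa using (hasSum_zero : HasSum (fun _ : ℕ => (0:ℂ)) 0)
  · have hsupp : ∀ k ∉ Finset.range (padicValNat p n), cc p z k n = 0 := by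
      intro k hk
      simp only [Finset.mem_range, not_lt] at hk
      simp only [cc, ite_eq_right_iff]
      intro hdvd
      have := (padicValNat_dvd_iff_le hn).1 hdvd
      omega
    have h : HasSum (fun k => cc p z k n) _ := hasSum_sum_of_ne_finset_zero hsupp
    have heq : ∀ k ∈ Finset.range (padicValNat p n), cc p z k n = z ^ n * (n : ℂ)⁻¹ := by
      intro k hk
      simp only [Finset.mem_range] at hk
      rw [cc, if_pos ((padicValNat_dvd_iff_le hn).2 (by omega))]
    rw [Finset.sum_congr rfl heq, Finset.sum_const, Finset.card_range] at h
    convert h using 1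
    rw [nsmul_eq_mul, div_eq_mul_inv]
    ring

lemma summable_cc (p : ℕ) (hp : p.Prime) {z : ℂ} (hz : ‖z‖ < 1) :
    Summable (fun q : ℕ × ℕ => cc p z q.1 q.2) := by
  set r := ‖z‖ with hr
  have hr0 : 0 ≤ r := norm_nonneg z
  set s : ℝ := (1 + r) / 2 with hs
  have hs0 : 0 < s := by rw [hs]; linarith
  have hs1 : s < 1 := by rw [hs]; linarith
  have hrs : r < s := by rw [hs]; linarith
  set t : ℝ := r / s with ht
  have ht0 : 0 ≤ t := div_nonneg hr0 hs0.le
  have ht1 : t < 1 := (div_lt_one hs0).2 hrs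
  have hst : s * t = r := by
    rw [ht]; field_simp
  have hbound : ∀ q : ℕ × ℕ, ‖cc p z q.1 q.2‖ ≤ t ^ q.1 * s ^ q.2 := by
    rintro ⟨k, n⟩
    have hpos : (0:ℝ) ≤ t ^ k * s ^ n :=
      mul_nonneg (pow_nonneg ht0 _) (pow_nonneg hs0.le _)
    simp only [cc]
    split
    · rename_i hdvd
      rcases Nat.eq_zero_or_pos n with hn | hn
      · subst hn; simpa using hpos
      · have hkn : k ≤ n := by
          have h1 : 2 ^ (k + 1) ≤ p ^ (k + 1) := Nat.pow_le_pow_left hp.two_le _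
          have h2 : p ^ (k + 1) ≤ n := Nat.le_of_dvd hn hdvd
          have h3 : k + 1 < 2 ^ (k + 1) := Nat.lt_two_pow_self
          omega
        have hninv : ‖(n : ℂ)⁻¹‖ ≤ 1 := by
          rw [norm_inv]
          rw [inv_le_one_iff₀]
          right
          simp only [Complex.norm_natCast]
          exact_mod_cast hn
        calc ‖z ^ n * (n : ℂ)⁻¹‖ ≤ r ^ n * 1 := by
              rw [norm_mul, norm_pow]
              exact mul_le_mul_of_nonneg_left hninv (pow_nonneg hr0 _)
          _ = (s * t) ^ n := by rw [mul_one, hst]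
          _ = s ^ n * t ^ n := mul_pow _ _ _
          _ ≤ s ^ n * t ^ k := by
              exact mul_le_mul_of_nonneg_left (pow_le_pow_of_le_one ht0 ht1.le hkn)
                (pow_nonneg hs0.le _)
          _ = t ^ k * s ^ n := mul_comm _ _
    · simpa using hpos
  exact Summable.of_norm_bounded
    ((summable_geometric_of_lt_one ht0 ht1).mul_of_nonneg
      (summable_geometric_of_lt_one hs0.le hs1)
      (fun k => pow_nonneg ht0 k) (fun n => pow_nonneg hs0.le n)) hbound

lemma hasSum_col (p : ℕ) (hp : p.Prime) {z : ℂ} (hz : ‖z‖ < 1) (k : ℕ) :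
    HasSum (fun n => cc p z k n)
      (-(Complex.log (1 - z ^ p ^ (k + 1))) / (p : ℂ) ^ (k + 1)) := by
  have hq : 0 < p ^ (k + 1) := pow_pos hp.pos _
  have hw : ‖z ^ p ^ (k + 1)‖ < 1 := by
    rw [norm_pow]; exact pow_lt_one₀ (norm_nonneg z) hz hq.ne'
  have h0 := Complex.hasSum_taylorSeries_neg_log hw
  have h1 : HasSum (fun m : ℕ => (z ^ p ^ (k + 1)) ^ (m + 1) / ((m : ℂ) + 1))
      (-Complex.log (1 - z ^ p ^ (k + 1))) := by
    have := (hasSum_nat_add_iff' (f := fun n : ℕ => (z ^ p ^ (k + 1)) ^ n / n) 1).2 h0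
    simpa using this
  have h2 := h1.div_const ((p ^ (k + 1) : ℕ) : ℂ)
  have hinj : Function.Injective (fun m : ℕ => p ^ (k + 1) * (m + 1)) := by
    intro a b hab
    simp only at hab
    exact Nat.succ_injective (Nat.eq_of_mul_eq_mul_left hq hab)
  refine (Function.Injective.hasSum_iff hinj ?_).1 ?_
  · intro n hn
    simp only [Set.mem_range, not_exists] at hn
    simp only [cc, ite_eq_right_iff]
    intro hdvd
    rcases Nat.eq_zero_or_pos n with h | h
    · subst h; simp
    · obtain ⟨m, hm⟩ := hdvd
      exfalso
      have hm1 : m ≠ 0 := by rintro rfl; omega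
      refine hn (m - 1) ?_
      have : m - 1 + 1 = m := by omega
      rw [this]; exact hm.symm
  · have hfun : ((fun n => cc p z k n) ∘ fun m : ℕ => p ^ (k + 1) * (m + 1))
        = fun m : ℕ => ((z ^ p ^ (k + 1)) ^ (m + 1) / ((m : ℂ) + 1)) / ((p ^ (k + 1) : ℕ) : ℂ) := by
      funext m
      have hd : p ^ (k + 1) ∣ p ^ (k + 1) * (m + 1) := ⟨m + 1, rfl⟩
      simp only [Function.comp_apply, cc, if_pos hd]
      rw [pow_mul]
      push_cast
      rw [mul_inv, div_div, div_eq_mul_inv, mul_inv]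
      ring
    rw [hfun]
    convert h2 using 2
    all_goals norm_cast

set_option maxHeartbeats 1000000 in
lemma hasSum_colsum (p : ℕ) (hp : p.Prime) {z : ℂ} (hz : ‖z‖ < 1) :
    HasSum (fun k : ℕ => -(Complex.log (1 - z ^ p ^ (k + 1))) / (p : ℂ) ^ (k + 1))
      (∑' n : ℕ, ((padicValNat p n : ℂ) / n) * z ^ n) := by
  have hSumm := summable_cc p hp hz
  have hF := hSumm.hasSum
  have h2 : HasSum (fun k : ℕ => -(Complex.log (1 - z ^ p ^ (k + 1))) / (p : ℂ) ^ (k + 1))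
      (∑' q : ℕ × ℕ, cc p z q.1 q.2) :=
    hF.prod_fiberwise (fun k => hasSum_col p hp hz k)
  have hswap : HasSum (fun q : ℕ × ℕ => cc p z q.2 q.1) (∑' q : ℕ × ℕ, cc p z q.1 q.2) :=
    ((Equiv.prodComm ℕ ℕ).hasSum_iff).2 hF
  have h1 : HasSum (fun n : ℕ => ((padicValNat p n : ℂ) / n) * z ^ n)
      (∑' q : ℕ × ℕ, cc p z q.1 q.2) :=
    hswap.prod_fiberwise (fun n => hasSum_row p hp z n)
  rwa [← h1.tsum_eq] at h2

lemma re_lower (p : ℕ) (hp : p.Prime) {K : ℕ} (hK : 1 ≤ K) {ζ : ℂ} (hζ : ζ ^ p ^ K = 1)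
    {r : ℝ} (hr0 : 0 ≤ r) (hr1 : r < 1) :
    Real.exp (-Real.log (1 - r ^ p ^ K) / (p : ℝ) ^ K
        - Real.log 2 / (p : ℝ) * (1 - (p : ℝ)⁻¹)⁻¹)
      ≤ ‖Tp p ((r : ℂ) * ζ)‖ := by
  have hpR : (1 : ℝ) < p := by exact_mod_cast hp.one_lt
  have hpK : (p : ℕ) ^ K ≠ 0 := pow_ne_zero _ hp.pos.ne'
  have habsζ : ‖ζ‖ = 1 := by
    have h := congrArg norm hζ
    rw [norm_pow, norm_one] at h
    rcases lt_trichotomy ‖ζ‖ 1 with h' | h' | h'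
    · exact absurd h (ne_of_lt (pow_lt_one₀ (norm_nonneg ζ) h' hpK))
    · exact h'
    · exact absurd h (ne_of_gt (one_lt_pow₀ h' hpK))
  set z : ℂ := (r : ℂ) * ζ with hzdef
  have hz : ‖z‖ < 1 := by
    rw [hzdef, norm_mul, habsζ, mul_one, Complex.norm_real, Real.norm_eq_abs,
      _root_.abs_of_nonneg hr0]
    exact hr1
  have hcol := hasSum_colsum p hp hz
  set S : ℂ := ∑' n : ℕ, ((padicValNat p n : ℂ) / n) * z ^ n with hSdef
  set u : ℕ → ℝ := fun k => -Real.log (‖1 - z ^ p ^ (k + 1)‖) / (p : ℝ) ^ (k + 1)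
    with hudef
  have hueq : ∀ k, (-(Complex.log (1 - z ^ p ^ (k + 1))) / (p : ℂ) ^ (k + 1)).re = u k := by
    intro k
    have hcast : ((p : ℂ)) ^ (k + 1) = (((p : ℝ) ^ (k + 1) : ℝ) : ℂ) := by push_cast; ring
    rw [hcast, Complex.div_ofReal_re, Complex.neg_re, Complex.log_re]
  have hre : HasSum u S.re := by
    have h := Complex.hasSum_re hcol
    simp only [hueq] at h
    exact h
  have hub : ∀ k, -Real.log 2 / (p : ℝ) ^ (k + 1) ≤ u k := by
    intro k
    have hppos : (0 : ℝ) < (p : ℝ) ^ (k + 1) := by positivity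
    have habs2 : ‖1 - z ^ p ^ (k + 1)‖ ≤ 2 := by
      calc ‖1 - z ^ p ^ (k + 1)‖ ≤ ‖(1 : ℂ)‖ + ‖z ^ p ^ (k + 1)‖ := norm_sub_le _ _
        _ ≤ 1 + 1 := by
            rw [norm_one, norm_pow]
            have : ‖z‖ ^ p ^ (k + 1) ≤ 1 := pow_le_one₀ (norm_nonneg z) hz.le
            linarith
        _ = 2 := by norm_num
    have hlog : Real.log (‖1 - z ^ p ^ (k + 1)‖) ≤ Real.log 2 := by
      rcases eq_or_lt_of_le (norm_nonneg (1 - z ^ p ^ (k + 1))) with h | h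
      · rw [← h, Real.log_zero]
        exact (Real.log_pos (by norm_num)).le
      · exact Real.log_le_log h habs2
    rw [hudef]
    have hneg := neg_le_neg hlog
    simp only []
    rw [div_eq_mul_inv, div_eq_mul_inv]
    exact mul_le_mul_of_nonneg_right hneg (by positivity)
  have hKK : K - 1 + 1 = K := Nat.succ_pred_eq_of_pos hK
  have hrpK : r ^ p ^ K < 1 := pow_lt_one₀ hr0 hr1 hpK
  have hval : u (K - 1) = -Real.log (1 - r ^ p ^ K) / (p : ℝ) ^ K := by
    rw [hudef]
    simp only [hKK]
    have hzpow : z ^ p ^ K = ((r ^ p ^ K : ℝ) : ℂ) := by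
      rw [hzdef, mul_pow, hζ, mul_one]
      push_cast
      ring
    rw [hzpow]
    have h1 : (1 : ℂ) - ((r ^ p ^ K : ℝ) : ℂ) = ((1 - r ^ p ^ K : ℝ) : ℂ) := by push_cast; ring
    rw [h1, Complex.norm_real, Real.norm_eq_abs, abs_of_pos (by linarith)]
  have hgeo : HasSum (fun k : ℕ => -Real.log 2 / (p : ℝ) ^ (k + 1))
      (-(Real.log 2) / (p : ℝ) * ((1 - (p : ℝ)⁻¹)⁻¹)) := by
    have h0 : HasSum (fun k : ℕ => ((p : ℝ)⁻¹) ^ k) ((1 - (p : ℝ)⁻¹)⁻¹) :=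
      hasSum_geometric_of_lt_one (by positivity) (by
        rw [inv_lt_one_iff₀]; right; exact hpR)
    have h1 := h0.mul_left (-(Real.log 2) / (p : ℝ))
    have hfe : (fun k : ℕ => -Real.log 2 / (p : ℝ) ^ (k + 1))
        = fun k : ℕ => -(Real.log 2) / (p : ℝ) * ((p : ℝ)⁻¹) ^ k := by
      funext k
      symm
      rw [inv_pow, ← div_eq_mul_inv, div_div, ← pow_succ']
    rw [hfe]
    have hv : -(Real.log 2) / (p : ℝ) * ((1 - (p : ℝ)⁻¹)⁻¹)
        = -(Real.log 2 / (p : ℝ) * (1 - (p : ℝ)⁻¹)⁻¹) := by ring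
    exact h1
  have hA := hasSum_ite_sub_hasSum hre (K - 1)
  have hcomp : ∀ k, -Real.log 2 / (p : ℝ) ^ (k + 1) ≤ (if k = K - 1 then 0 else u k) := by
    intro k
    split
    · apply div_nonpos_of_nonpos_of_nonneg
      · exact neg_nonpos.2 (Real.log_nonneg one_le_two)
      · positivity
    · exact hub k
  have hge := hasSum_le hcomp hgeo hA
  have hTnorm : ‖Tp p z‖ = Real.exp S.re := by
    rw [Tp, Complex.norm_exp]
  rw [hTnorm]
  apply Real.exp_le_exp.2
  rw [hval] at hge
  have hB : -(Real.log 2) / (p : ℝ) * ((1 - (p : ℝ)⁻¹)⁻¹)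
      = -(Real.log 2 / (p : ℝ) * (1 - (p : ℝ)⁻¹)⁻¹) := by ring
  rw [hB] at hge
  linarith [hge]

lemma tendsto_aux (p : ℕ) (hp : p.Prime) {K : ℕ} (hK : 1 ≤ K) {ζ : ℂ}
    (hζ : ζ ^ p ^ K = 1) :
    Tendsto (fun r : ℝ => ‖Tp p ((r : ℂ) * ζ)‖) (𝓝[<] (1 : ℝ)) atTop := by
  have hm : p ^ K ≠ 0 := pow_ne_zero _ hp.pos.ne'
  have h1 : Tendsto (fun r : ℝ => 1 - r ^ p ^ K) (𝓝[<] (1 : ℝ)) (𝓝[>] (0 : ℝ)) := by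
    apply tendsto_nhdsWithin_of_tendsto_nhds_of_eventually_within
    · have hc : Continuous fun r : ℝ => 1 - r ^ p ^ K := by continuity
      have h := hc.tendsto 1
      simp only [one_pow, sub_self] at h
      exact h.mono_left nhdsWithin_le_nhds
    · filter_upwards [Ioo_mem_nhdsLT_of_mem
        (show (1 : ℝ) ∈ Set.Ioc (0 : ℝ) 1 by norm_num)] with r hr
      have : r ^ p ^ K < 1 := pow_lt_one₀ hr.1.le hr.2 hm
      simp only [Set.mem_Ioi]
      linarith
  have h2 : Tendsto (fun r : ℝ => Real.log (1 - r ^ p ^ K)) (𝓝[<] (1 : ℝ)) atBot :=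
    Real.tendsto_log_nhdsGT_zero.comp h1
  have h3 : Tendsto (fun r : ℝ => -Real.log (1 - r ^ p ^ K)) (𝓝[<] (1 : ℝ)) atTop :=
    tendsto_neg_atBot_atTop.comp h2
  have hppos : (0 : ℝ) < (p : ℝ) := by exact_mod_cast hp.pos
  have h4 := h3.atTop_div_const (show (0 : ℝ) < (p : ℝ) ^ K by positivity)
  have h5 := tendsto_atTop_add_const_right _
    (-(Real.log 2 / (p : ℝ) * (1 - (p : ℝ)⁻¹)⁻¹)) h4
  have h6 := Real.tendsto_exp_atTop.comp h5
  apply tendsto_atTop_mono' _ _ h6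
  filter_upwards [Ioo_mem_nhdsLT_of_mem
    (show (1 : ℝ) ∈ Set.Ioc (0 : ℝ) 1 by norm_num)] with r hr
  have h := re_lower p hp hK hζ hr.1.le hr.2
  simpa [Function.comp, sub_eq_add_neg] using h

set_option maxHeartbeats 1000000 in
lemma no_circle_point (p : ℕ) (hp : p.Prime) (U : Set ℂ) (hUopen : IsOpen U)
    (g : ℂ → ℂ) (hg : AnalyticOnNhd ℂ g U)
    (hgT : ∀ z ∈ Metric.ball (0 : ℂ) 1, g z = Tp p z)
    {ζ₀ : ℂ} (hζ₀U : ζ₀ ∈ U) (habs : ‖ζ₀‖ = 1) : False := by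
  obtain ⟨ε, hε, hballU⟩ := Metric.isOpen_iff.1 hUopen ζ₀ hζ₀U
  -- find a p-power root of unity in `ball ζ₀ ε`
  obtain ⟨θ, hθ⟩ := (Complex.norm_eq_one_iff ζ₀).1 habs
  have hp1 : (1 : ℝ) < p := by exact_mod_cast hp.one_lt
  obtain ⟨K₀, hK₀⟩ := pow_unbounded_of_one_lt (max (4 * Real.pi / ε) 4) hp1
  set K := K₀ + 1 with hKdef
  have hpKbig : max (4 * Real.pi / ε) 4 < (p : ℝ) ^ K := by
    refine lt_of_lt_of_le hK₀ ?_
    exact pow_le_pow_right₀ (by linarith) (by omega)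
  have hpK4 : (4 : ℝ) ≤ (p : ℝ) ^ K := le_of_lt (lt_of_le_of_lt (le_max_right _ _) hpKbig)
  have hpKε : 4 * Real.pi / ε < (p : ℝ) ^ K := lt_of_le_of_lt (le_max_left _ _) hpKbig
  set n : ℕ := p ^ K with hndef
  have hppos : (0 : ℝ) < (p : ℝ) := by exact_mod_cast hp.pos
  have hnR : ((n : ℝ)) = (p : ℝ) ^ K := by rw [hndef]; push_cast; ring
  have hn0 : (0 : ℝ) < n := by rw [hnR]; positivity
  set j : ℤ := round ((n : ℝ) * θ / (2 * Real.pi)) with hjdef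
  set φ : ℝ := 2 * Real.pi * j / n with hφdef
  set ζ : ℂ := Complex.exp (φ * Complex.I) with hζdef
  have hζroot : ζ ^ (n : ℕ) = 1 := by
    rw [hζdef, ← Complex.exp_nat_mul]
    have : ((n : ℂ)) * (φ * Complex.I) = (j : ℂ) * (2 * Real.pi * Complex.I) := by
      rw [hφdef]
      push_cast
      have hn0' : ((n : ℂ)) ≠ 0 := by exact_mod_cast (ne_of_gt (by exact_mod_cast hn0 : (0:ℝ) < (n:ℝ)))
      field_simp
    rw [this]
    exact Complex.exp_int_mul_two_pi_mul_I j
  have hφθ : |φ - θ| ≤ Real.pi / n := by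
    rw [hφdef]
    have h1 : 2 * Real.pi * j / n - θ = (2 * Real.pi / n) * (j - (n : ℝ) * θ / (2 * Real.pi)) := by
      field_simp
    rw [h1, abs_mul]
    have h2 : |(j : ℝ) - (n : ℝ) * θ / (2 * Real.pi)| ≤ 1 / 2 := by
      rw [abs_sub_comm]
      exact abs_sub_round _
    have h3 : |2 * Real.pi / n| = 2 * Real.pi / n := by
      rw [abs_of_pos]
      positivity
    rw [h3]
    calc 2 * Real.pi / n * |(j : ℝ) - (n : ℝ) * θ / (2 * Real.pi)|
        ≤ 2 * Real.pi / n * (1 / 2) := by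
          apply mul_le_mul_of_nonneg_left h2
          positivity
      _ = Real.pi / n := by ring
  have hπn1 : Real.pi / n ≤ 1 := by
    rw [hnR]
    rw [div_le_one (by positivity)]
    have := Real.pi_le_four
    linarith
  have hcast : ((φ : ℂ)) - ((θ : ℂ)) = (((φ - θ : ℝ)) : ℂ) := by push_cast; ring
  have hζnear : ζ ∈ Metric.ball ζ₀ ε := by
    rw [Metric.mem_ball]
    have hkey : ζ - ζ₀ = Complex.exp ((θ : ℂ) * Complex.I)
        * (Complex.exp ((((φ - θ : ℝ)) : ℂ) * Complex.I) - 1) := by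
      rw [mul_sub, mul_one, ← Complex.exp_add, hθ, hζdef]
      congr 1
      push_cast
      ring
    have habsθ : ‖Complex.exp ((θ : ℂ) * Complex.I)‖ = 1 := by
      rw [Complex.norm_exp]; simp
    have hdist : dist ζ ζ₀ = ‖Complex.exp ((((φ - θ : ℝ)) : ℂ) * Complex.I) - 1‖ := by
      rw [Complex.dist_eq, hkey, norm_mul, habsθ, one_mul]
    rw [hdist]
    have habsarg : ‖(((φ - θ : ℝ)) : ℂ) * Complex.I‖ = |φ - θ| := by
      rw [norm_mul, Complex.norm_I, mul_one, Complex.norm_real, Real.norm_eq_abs]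
    have hle : ‖Complex.exp ((((φ - θ : ℝ)) : ℂ) * Complex.I) - 1‖
        ≤ 2 * |φ - θ| := by
      have := Complex.norm_exp_sub_one_le (x := (((φ - θ : ℝ)) : ℂ) * Complex.I)
        (by rw [habsarg]; exact le_trans hφθ hπn1)
      rwa [habsarg] at this
    refine lt_of_le_of_lt hle ?_
    have h4 : 2 * |φ - θ| ≤ 2 * (Real.pi / n) := by linarith [hφθ]
    refine lt_of_le_of_lt h4 ?_
    have hpKpos : (0 : ℝ) < (p : ℝ) ^ K := by positivity
    rw [hnR]
    have he : 2 * (Real.pi / (p : ℝ) ^ K) = 2 * Real.pi / (p : ℝ) ^ K := by ring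
    rw [he, div_lt_iff₀ hpKpos]
    rw [div_lt_iff₀ hε] at hpKε
    nlinarith [Real.pi_pos]
  have hζU : ζ ∈ U := hballU hζnear
  have habsζ : ‖ζ‖ = 1 := by
    rw [hζdef, Complex.norm_exp]
    simp
  -- the blow-up along the radius to ζ
  have hblow : Tendsto (fun r : ℝ => ‖Tp p ((r : ℂ) * ζ)‖) (𝓝[<] (1 : ℝ)) atTop :=
    tendsto_aux p hp (by omega : 1 ≤ K) (by rw [← hndef]; exact hζroot)
  -- but g is continuous at ζ and equals Tp on the radius
  have hgc : ContinuousAt g ζ := (hg ζ hζU).continuousAt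
  have hrad : Tendsto (fun r : ℝ => (r : ℂ) * ζ) (𝓝[<] (1 : ℝ)) (𝓝 ζ) := by
    have hc : Continuous fun r : ℝ => (r : ℂ) * ζ := by continuity
    have := hc.tendsto 1
    simp only [Complex.ofReal_one, one_mul] at this
    exact this.mono_left nhdsWithin_le_nhds
  have hglim : Tendsto (fun r : ℝ => ‖g ((r : ℂ) * ζ)‖) (𝓝[<] (1 : ℝ)) (𝓝 ‖g ζ‖) :=
    (continuous_norm.tendsto (g ζ)).comp (hgc.tendsto.comp hrad)
  have heq : ∀ᶠ r : ℝ in 𝓝[<] (1 : ℝ), ‖g ((r : ℂ) * ζ)‖ = ‖Tp p ((r : ℂ) * ζ)‖ := by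
    filter_upwards [Ioo_mem_nhdsLT_of_mem
      (show (1 : ℝ) ∈ Set.Ioc (0 : ℝ) 1 by norm_num)] with r hr
    have hmem : (r : ℂ) * ζ ∈ Metric.ball (0 : ℂ) 1 := by
      rw [Metric.mem_ball, dist_zero_right, norm_mul, habsζ, mul_one,
        Complex.norm_real, Real.norm_eq_abs, _root_.abs_of_nonneg hr.1.le]
      exact hr.2
    rw [hgT _ hmem]
  have hTlim : Tendsto (fun r : ℝ => ‖Tp p ((r : ℂ) * ζ)‖) (𝓝[<] (1 : ℝ)) (𝓝 ‖g ζ‖) :=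
    hglim.congr' heq
  exact not_tendsto_atTop_of_tendsto_nhds hTlim hblow

end Stmt17Aux

theorem stmt_17 (p : ℕ) (hp : p.Prime) (U : Set ℂ) (hUopen : IsOpen U)
    (hUconn : IsConnected U) (hball : Metric.ball (0 : ℂ) 1 ⊆ U)
    (g : ℂ → ℂ) (hg : AnalyticOnNhd ℂ g U)
    (hgT : ∀ z ∈ Metric.ball (0 : ℂ) 1, g z = Tp p z) :
    U = Metric.ball (0 : ℂ) 1 := by
  have hnone : ∀ w ∈ U, ‖w‖ ≠ 1 := by
    intro w hw hnorm
    exact Stmt17Aux.no_circle_point p hp U hUopen g hg hgT hw hnorm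
  refine le_antisymm ?_ hball
  intro w hw
  by_contra hwout
  rw [Metric.mem_ball, dist_zero_right, not_lt] at hwout
  have hwgt : 1 < ‖w‖ := lt_of_le_of_ne hwout (fun h => hnone w hw h.symm)
  have hpre := hUconn.isPreconnected
  have hU12 : U ⊆ Metric.ball (0 : ℂ) 1 ∪ {v : ℂ | 1 < ‖v‖} := by
    intro v hv
    rcases lt_trichotomy ‖v‖ 1 with h | h | h
    · left; rwa [Metric.mem_ball, dist_zero_right]
    · exact absurd h (hnone v hv)
    · right; exact h
  have hopen2 : IsOpen {v : ℂ | 1 < ‖v‖} := by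
    have : {v : ℂ | 1 < ‖v‖} = (fun v : ℂ => ‖v‖) ⁻¹' Set.Ioi 1 := rfl
    rw [this]
    exact continuous_norm.isOpen_preimage _ isOpen_Ioi
  have h1 : (U ∩ Metric.ball (0 : ℂ) 1).Nonempty := ⟨0, hball (by simp), by simp⟩
  have h2 : (U ∩ {v : ℂ | 1 < ‖v‖}).Nonempty := ⟨w, hw, hwgt⟩
  obtain ⟨v, hv⟩ := hpre _ _ Metric.isOpen_ball hopen2 hU12 h1 h2
  obtain ⟨-, hv1, hv2⟩ := hv
  rw [Metric.mem_ball, dist_zero_right] at hv1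
  exact absurd hv2 (by simp only [Set.mem_setOf_eq]; linarith)
end
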